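/- Define σ² := ∫_{D∖{1}} (1−|z|²)/|1−z|² ν(dz) ∈ [0,∞] and I_n := (1/n) ∫_D |1 + z + ⋯ + z^{n−1}|² ν(dz). Then Var_n/n converges to a finite limit K as n → ∞ if and only if σ² < ∞ and I_n converges to a finite limit L as n → ∞; in that case K = σ² + L. -/

import Mathlib

/-!
Write `A_m(z) = |1 + z + ⋯ + z^{m-1}|²`. Pointwise, the integrand of `Var_n` equals
`A_n(z) + (1 - |z|²) ∑_{m<n} A_m(z)`, so `Var_n / n = ∫ f_n dν + I_n` with
`f_n(z) = (1 - |z|²) · (1/n) ∑_{m<n} A_m(z) ≥ 0`. Since `|1 - z| √A_m(z) = |z^m - 1| ≤ 2`,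
`f_n ≤ 4 P` for the Poisson kernel `P(z) = (1 - |z|²)/|1 - z|²`, and `f_n → P` pointwise
(for `|z| < 1` the geometric sums converge to `1/(1 - z)`; on the circle both sides vanish).
Fatou's lemma turns a bound on `Var_n / n` into `σ² = ∫ P dν < ∞`, and dominated convergence
then gives `∫ f_n dν → σ²`.
-/

open MeasureTheory Filter Topology Set

/-- The variance sequence `Var_n = ∫_D (n + 2 ∑_{k=1}^{n-1} (n-k) Re(z^k)) ν(dz)`. -/
noncomputable def VarSeq (ν : Measure ℂ) (n : ℕ) : ℝ :=
  ∫ z, ((n : ℝ) + 2 * ∑ k ∈ Finset.Ico 1 n, ((n : ℝ) - (k : ℝ)) * (z ^ k).re) ∂ν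

/-- `σ² = ∫_{D∖{1}} (1-|z|²)/|1-z|² ν(dz) ∈ [0,∞]`. -/
noncomputable def sigmaSq (ν : Measure ℂ) : ENNReal :=
  ∫⁻ z in {z : ℂ | z ≠ 1},
    ENNReal.ofReal ((1 - ‖z‖ ^ 2) / ‖1 - z‖ ^ 2) ∂ν

/-- `I_n = (1/n) ∫_D |1 + z + ⋯ + z^{n-1}|² ν(dz)`. -/
noncomputable def Iseq (ν : Measure ℂ) (n : ℕ) : ℝ :=
  (1 / (n : ℝ)) * ∫ z, ‖∑ k ∈ Finset.range n, z ^ k‖ ^ 2 ∂ν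

open Finset

noncomputable def geomSumNormSq (n : ℕ) (z : ℂ) : ℝ :=
  ‖∑ k ∈ range n, z ^ k‖ ^ 2

noncomputable def varianceKernel (n : ℕ) (z : ℂ) : ℝ :=
  (n : ℝ) + 2 * ∑ k ∈ Ico 1 n, ((n : ℝ) - (k : ℝ)) * (z ^ k).re

noncomputable def cesaroKernel (n : ℕ) (z : ℂ) : ℝ :=
  (1 - ‖z‖ ^ 2) * ((n : ℝ)⁻¹ * ∑ m ∈ range n, geomSumNormSq m z)

section Pointwise

variable {z : ℂ}

lemma poissonKernel_zero_one : poissonKernel 0 z 1 = (1 - ‖z‖ ^ 2) / ‖1 - z‖ ^ 2 := by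
  simp [poissonKernel]

lemma geomSumNormSq_succ (n : ℕ) :
    geomSumNormSq (n + 1) z =
      1 + 2 * (z * ∑ k ∈ range n, z ^ k).re + ‖z‖ ^ 2 * geomSumNormSq n z := by
  have hsplit : ∑ k ∈ range (n + 1), z ^ k = 1 + z * ∑ k ∈ range n, z ^ k := by
    rw [geom_sum_succ]; ring
  simp only [geomSumNormSq, Complex.sq_norm, hsplit, Complex.normSq_add, Complex.normSq_mul,
    Complex.normSq_one, one_mul, Complex.conj_re]
  ring

lemma varianceKernel_succ (n : ℕ) :
    varianceKernel (n + 1) z =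
      varianceKernel n z + (1 + 2 * (z * ∑ k ∈ range n, z ^ k).re) := by
  have hshift : z * ∑ k ∈ range n, z ^ k = ∑ k ∈ Ico 1 (n + 1), z ^ k := by
    rw [sum_Ico_eq_sum_range, mul_sum, Nat.add_sub_cancel]
    exact sum_congr rfl fun k _ => by ring
  rcases n with _ | n
  · simp [varianceKernel]
  have hweights : ∑ k ∈ Ico 1 (n + 1), ((n + 1 + 1 : ℝ) - k) * (z ^ k).re =
      ∑ k ∈ Ico 1 (n + 1), ((n + 1 : ℝ) - k) * (z ^ k).re +
        ∑ k ∈ Ico 1 (n + 1), (z ^ k).re := by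
    rw [← sum_add_distrib]
    exact sum_congr rfl fun k _ => by ring
  simp only [varianceKernel, hshift, sum_Ico_succ_top (by omega : 1 ≤ n + 1), Complex.add_re,
    Complex.re_sum]
  push_cast
  linear_combination 2 * hweights

lemma varianceKernel_eq (n : ℕ) :
    varianceKernel n z =
      geomSumNormSq n z + (1 - ‖z‖ ^ 2) * ∑ m ∈ range n, geomSumNormSq m z := by
  induction n with
  | zero => simp [varianceKernel, geomSumNormSq]
  | succ n ih =>
    rw [varianceKernel_succ, ih, sum_range_succ, geomSumNormSq_succ]
    ring

lemma cesaroKernel_eq (n : ℕ) :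
    cesaroKernel n z = (n : ℝ)⁻¹ * (varianceKernel n z - geomSumNormSq n z) := by
  rw [varianceKernel_eq, cesaroKernel]; ring

lemma geomSumNormSq_le (hz : ‖z‖ ≤ 1) (hz1 : z ≠ 1) (n : ℕ) :
    geomSumNormSq n z ≤ 4 / ‖1 - z‖ ^ 2 := by
  have hpos : 0 < ‖1 - z‖ := norm_pos_iff.mpr (sub_ne_zero.mpr hz1.symm)
  have htelescope : ‖∑ k ∈ range n, z ^ k‖ * ‖1 - z‖ = ‖z ^ n - 1‖ := by
    rw [norm_sub_rev 1 z, ← norm_mul, geom_sum_mul]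
  have htwo : ‖z ^ n - 1‖ ≤ 2 := by
    have := norm_sub_le (z ^ n) 1
    rw [norm_pow, norm_one] at this
    linarith [pow_le_one₀ (norm_nonneg z) hz (n := n)]
  rw [le_div_iff₀ (by positivity), geomSumNormSq, ← mul_pow, htelescope]
  nlinarith [norm_nonneg (z ^ n - 1)]

lemma cesaroKernel_nonneg (hz : ‖z‖ ≤ 1) (n : ℕ) : 0 ≤ cesaroKernel n z := by
  have h : 0 ≤ 1 - ‖z‖ ^ 2 := sub_nonneg.2 (pow_le_one₀ (norm_nonneg z) hz)
  unfold cesaroKernel geomSumNormSq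
  positivity

lemma cesaroKernel_le (hz : ‖z‖ ≤ 1) (n : ℕ) :
    cesaroKernel n z ≤ 4 * poissonKernel 0 z 1 := by
  rcases eq_or_ne z 1 with rfl | hz1
  · simp [cesaroKernel, poissonKernel_zero_one]
  have hmean : (n : ℝ)⁻¹ * ∑ m ∈ range n, geomSumNormSq m z ≤ 4 / ‖1 - z‖ ^ 2 := by
    rcases n.eq_zero_or_pos with rfl | hn
    · simp only [CharP.cast_eq_zero, inv_zero, zero_mul]; positivity
    rw [inv_mul_le_iff₀ (by exact_mod_cast hn)]
    simpa using sum_le_card_nsmul (range n) _ _ fun m _ => geomSumNormSq_le hz hz1 m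
  calc cesaroKernel n z ≤ (1 - ‖z‖ ^ 2) * (4 / ‖1 - z‖ ^ 2) :=
        mul_le_mul_of_nonneg_left hmean (sub_nonneg.2 (pow_le_one₀ (norm_nonneg z) hz))
    _ = 4 * poissonKernel 0 z 1 := by rw [poissonKernel_zero_one]; ring

lemma tendsto_cesaroKernel (hz : ‖z‖ ≤ 1) :
    Tendsto (cesaroKernel · z) atTop (𝓝 (poissonKernel 0 z 1)) := by
  rcases hz.lt_or_eq with hz | hz
  · have hgeom : Tendsto (geomSumNormSq · z) atTop (𝓝 (‖(1 - z)⁻¹‖ ^ 2)) :=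
      ((hasSum_geometric_of_norm_lt_one hz).tendsto_sum_nat.norm).pow 2
    have hlimit : (1 - ‖z‖ ^ 2) * ‖(1 - z)⁻¹‖ ^ 2 = poissonKernel 0 z 1 := by
      rw [poissonKernel_zero_one, norm_inv, inv_pow, div_eq_mul_inv]
    rw [← hlimit]
    exact hgeom.cesaro.const_mul (1 - ‖z‖ ^ 2)
  · simp [cesaroKernel, poissonKernel_zero_one, hz]

lemma continuous_cesaroKernel (n : ℕ) : Continuous (cesaroKernel n) := by
  unfold cesaroKernel geomSumNormSq
  fun_prop

end Pointwise

lemma lintegral_ofReal_lt_top_of_tendsto_of_bddAbove {α : Type*} [MeasurableSpace α]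
    {μ : Measure α} {F : ℕ → α → ℝ} {g : α → ℝ} (hF : ∀ n, Integrable (F n) μ)
    (hF_nonneg : ∀ n, 0 ≤ᵐ[μ] F n) (hlim : ∀ᵐ x ∂μ, Tendsto (F · x) atTop (𝓝 (g x)))
    (hbdd : BddAbove (range fun n => ∫ x, F n x ∂μ)) :
    ∫⁻ x, ENNReal.ofReal (g x) ∂μ < ⊤ := by
  obtain ⟨M, hM⟩ := hbdd
  calc ∫⁻ x, ENNReal.ofReal (g x) ∂μ
      = ∫⁻ x, liminf (fun n => ENNReal.ofReal (F n x)) atTop ∂μ := by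
        refine lintegral_congr_ae ?_
        filter_upwards [hlim] with x hx
        exact ((ENNReal.tendsto_ofReal hx).liminf_eq).symm
    _ ≤ liminf (fun n => ∫⁻ x, ENNReal.ofReal (F n x) ∂μ) atTop :=
        lintegral_liminf_le' fun n => (hF n).aemeasurable.ennreal_ofReal
    _ ≤ ENNReal.ofReal M := by
        refine liminf_le_of_frequently_le' (Frequently.of_forall fun n => ?_)
        rw [← ofReal_integral_eq_lintegral_ofReal (hF n) (hF_nonneg n)]
        exact ENNReal.ofReal_le_ofReal (hM (mem_range_self n))
    _ < ⊤ := ENNReal.ofReal_lt_top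

lemma Iseq_nonneg (ν : Measure ℂ) (n : ℕ) : 0 ≤ Iseq ν n :=
  mul_nonneg (by positivity) (integral_nonneg fun _ => by positivity)

-- At `z = 1` the kernel is `0 / 0 = 0`, so excluding `{1}` changes nothing.
lemma sigmaSq_eq_lintegral_poissonKernel (ν : Measure ℂ) :
    sigmaSq ν = ∫⁻ z, ENNReal.ofReal (poissonKernel 0 z 1) ∂ν := by
  rw [sigmaSq, ← lintegral_indicator isOpen_ne.measurableSet]
  refine lintegral_congr fun z => ?_
  rcases eq_or_ne z 1 with rfl | hz
  · simp [poissonKernel_zero_one]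
  · simp [hz, poissonKernel_zero_one]

section Measure

variable {ν : Measure ℂ}

lemma Continuous.integrable_of_ae_norm_le_one [IsFiniteMeasure ν] {f : ℂ → ℝ}
    (hf : Continuous f) (hν : ∀ᵐ z ∂ν, ‖z‖ ≤ 1) : Integrable f ν := by
  have hball : ∀ᵐ z ∂ν, z ∈ Metric.closedBall (0 : ℂ) 1 := by simpa using hν
  rw [← Measure.restrict_eq_self_of_ae_mem hball]
  exact hf.continuousOn.integrableOn_compact (isCompact_closedBall 0 1)

lemma VarSeq_div_eq [IsFiniteMeasure ν] (hν : ∀ᵐ z ∂ν, ‖z‖ ≤ 1) (n : ℕ) :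
    VarSeq ν n / n = ∫ z, cesaroKernel n z ∂ν + Iseq ν n := by
  have hvar : Integrable (varianceKernel n) ν :=
    Continuous.integrable_of_ae_norm_le_one (by unfold varianceKernel; fun_prop) hν
  have hgeom : Integrable (geomSumNormSq n) ν :=
    Continuous.integrable_of_ae_norm_le_one (by unfold geomSumNormSq; fun_prop) hν
  simp only [cesaroKernel_eq, integral_const_mul, integral_sub hvar hgeom]
  simp only [VarSeq, Iseq, varianceKernel, geomSumNormSq]
  ring

lemma tendsto_integral_cesaroKernel (hν : ∀ᵐ z ∂ν, ‖z‖ ≤ 1) (hσ : sigmaSq ν < ⊤) :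
    Tendsto (fun n => ∫ z, cesaroKernel n z ∂ν) atTop (𝓝 (sigmaSq ν).toReal) := by
  have hP_nonneg : 0 ≤ᵐ[ν] fun z => poissonKernel 0 z 1 := by
    filter_upwards [hν] with z hz
    exact ge_of_tendsto' (tendsto_cesaroKernel hz) (cesaroKernel_nonneg hz)
  have hP_meas : AEStronglyMeasurable (fun z => poissonKernel 0 z 1) ν := by
    unfold poissonKernel; exact Measurable.aestronglyMeasurable (by fun_prop)
  have hP_int : Integrable (fun z => poissonKernel 0 z 1) ν := by
    refine ⟨hP_meas, ?_⟩
    rwa [hasFiniteIntegral_iff_ofReal hP_nonneg, ← sigmaSq_eq_lintegral_poissonKernel]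
  rw [sigmaSq_eq_lintegral_poissonKernel,
    ← integral_eq_lintegral_of_nonneg_ae hP_nonneg hP_meas]
  refine tendsto_integral_of_dominated_convergence (fun z => 4 * poissonKernel 0 z 1)
    (fun n => (continuous_cesaroKernel n).aestronglyMeasurable) (hP_int.const_mul 4)
    (fun n => ?_) (by filter_upwards [hν] with z hz using tendsto_cesaroKernel hz)
  filter_upwards [hν] with z hz
  rw [Real.norm_of_nonneg (cesaroKernel_nonneg hz n)]
  exact cesaroKernel_le hz n

lemma sigmaSq_lt_top_of_bddAbove [IsFiniteMeasure ν] (hν : ∀ᵐ z ∂ν, ‖z‖ ≤ 1)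
    (hbdd : BddAbove (range fun n => ∫ z, cesaroKernel n z ∂ν)) : sigmaSq ν < ⊤ := by
  rw [sigmaSq_eq_lintegral_poissonKernel]
  exact lintegral_ofReal_lt_top_of_tendsto_of_bddAbove
    (fun n => (continuous_cesaroKernel n).integrable_of_ae_norm_le_one hν)
    (fun n => by filter_upwards [hν] with z hz using cesaroKernel_nonneg hz n)
    (by filter_upwards [hν] with z hz using tendsto_cesaroKernel hz) hbdd

end Measure

theorem linear_variance_iff_sigma_finite_and_In_converges
    (ν : Measure ℂ) [IsFiniteMeasure ν]
    (hsupp : ν {z : ℂ | ¬ ‖z‖ ≤ 1} = 0) :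
    ((∃ K : ℝ, Tendsto (fun n : ℕ => VarSeq ν n / (n : ℝ)) atTop (𝓝 K)) ↔
      (sigmaSq ν < ⊤ ∧ ∃ L : ℝ, Tendsto (Iseq ν) atTop (𝓝 L))) ∧
    ∀ K L : ℝ, Tendsto (fun n : ℕ => VarSeq ν n / (n : ℝ)) atTop (𝓝 K) →
      Tendsto (Iseq ν) atTop (𝓝 L) → K = (sigmaSq ν).toReal + L := by
  have hν : ∀ᵐ z ∂ν, ‖z‖ ≤ 1 := ae_iff.mpr hsupp
  have hσ : ∀ K, Tendsto (fun n : ℕ => VarSeq ν n / n) atTop (𝓝 K) → sigmaSq ν < ⊤ := by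
    intro K hK
    obtain ⟨M, hM⟩ := hK.bddAbove_range
    refine sigmaSq_lt_top_of_bddAbove hν ⟨M, forall_mem_range.2 fun n => ?_⟩
    linarith [VarSeq_div_eq hν n, Iseq_nonneg ν n, hM (mem_range_self n)]
  have hIseq : ∀ K, Tendsto (fun n : ℕ => VarSeq ν n / n) atTop (𝓝 K) →
      Tendsto (Iseq ν) atTop (𝓝 (K - (sigmaSq ν).toReal)) := fun K hK =>
    (hK.sub (tendsto_integral_cesaroKernel hν (hσ K hK))).congr fun n => by
      rw [VarSeq_div_eq hν]; ring
  have hVar : sigmaSq ν < ⊤ → ∀ L, Tendsto (Iseq ν) atTop (𝓝 L) →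
      Tendsto (fun n : ℕ => VarSeq ν n / n) atTop (𝓝 ((sigmaSq ν).toReal + L)) :=
    fun hσ' L hL => ((tendsto_integral_cesaroKernel hν hσ').add hL).congr fun n =>
      (VarSeq_div_eq hν n).symm
  refine ⟨⟨fun ⟨K, hK⟩ => ⟨hσ K hK, _, hIseq K hK⟩, fun ⟨hσ', L, hL⟩ => ⟨_, hVar hσ' L hL⟩⟩,
    fun K L hK hL => ?_⟩
  linarith [tendsto_nhds_unique hL (hIseq K hK)]
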